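/- The shaped optimal Q-function satisfies Q'*(s,x) = Q*(s,x) − φ(s) for all s, x, where Q* is the optimal Q-function of the original finite MDP and Q'* that of the MDP with shaped reward r + γφ(s') − φ(s). -/
import Mathlib


open Finset

noncomputable def fmax {A : Type*} [Fintype A] [Nonempty A] (f : A → ℝ) : ℝ :=
  Finset.univ.sup' Finset.univ_nonempty f

lemma le_fmax {A : Type*} [Fintype A] [Nonempty A] (f : A → ℝ) (a : A) :
    f a ≤ fmax f := Finset.le_sup' f (Finset.mem_univ a)

lemma fmax_le {A : Type*} [Fintype A] [Nonempty A] {f : A → ℝ} {c : ℝ}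
    (h : ∀ a, f a ≤ c) : fmax f ≤ c :=
  Finset.sup'_le _ _ fun a _ => h a

lemma abs_fmax_sub_fmax_le {A : Type*} [Fintype A] [Nonempty A]
    (f g : A → ℝ) {c : ℝ} (h : ∀ a, |f a - g a| ≤ c) :
    |fmax f - fmax g| ≤ c := by
  rw [abs_le]
  constructor
  · have : fmax g ≤ fmax f + c := fmax_le fun a => by
      have := (abs_le.mp (h a)).1
      have := le_fmax f a; linarith
    linarith
  · have : fmax f ≤ fmax g + c := fmax_le fun a => by
      have := (abs_le.mp (h a)).2
      have := le_fmax g a; linarith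
    linarith

theorem pbrs_Q_shift
    {S X : Type*} [Fintype S] [Nonempty S] [Fintype X] [Nonempty X]
    (γ : ℝ) (hγ0 : 0 ≤ γ) (hγ1 : γ < 1)
    (r : S → X → ℝ) (T : S → X → S → ℝ)
    (hT0 : ∀ s x s', 0 ≤ T s x s') (hT1 : ∀ s x, (∑ s', T s x s') = 1)
    (φ : S → ℝ) (Qstar Q'star : S → X → ℝ)
    (hQ : ∀ s x, Qstar s x =
      r s x + γ * ∑ s', T s x s' * fmax (fun x' => Qstar s' x'))
    (hQ' : ∀ s x, Q'star s x =
      (r s x + γ * (∑ s', T s x s' * φ s') - φ s) +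
        γ * ∑ s', T s x s' * fmax (fun x' => Q'star s' x')) :
    ∀ s x, Q'star s x = Qstar s x - φ s := by
  set D : S → X → ℝ := fun s x => Q'star s x - (Qstar s x - φ s) with hD
  set M : ℝ := fmax (fun p : S × X => |D p.1 p.2|) with hM
  have hMnonneg : 0 ≤ M := le_trans (abs_nonneg _)
    (le_fmax (fun p : S × X => |D p.1 p.2|) (Classical.arbitrary _))
  have hDle : ∀ s x, |D s x| ≤ M := fun s x => le_fmax (fun p : S × X => |D p.1 p.2|) (s, x)
  -- key: fmax (Q - φ) = fmax Q - φ
  have hshift : ∀ (s' : S),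
      fmax (fun x' => Qstar s' x') - φ s' = fmax (fun x' => Qstar s' x' - φ s') := by
    intro s'
    apply le_antisymm
    · have : fmax (fun x' => Qstar s' x') ≤ fmax (fun x' => Qstar s' x' - φ s') + φ s' :=
        fmax_le fun a => by have := le_fmax (fun x' => Qstar s' x' - φ s') a; linarith
      linarith
    · exact fmax_le fun a => by have := le_fmax (fun x' => Qstar s' x') a; linarith
  -- bound: |D s x| ≤ γ * M
  have hbound : ∀ s x, |D s x| ≤ γ * M := by
    intro s x
    have hDval : D s x = γ * ∑ s', T s x s' *
        (fmax (fun x' => Q'star s' x') - fmax (fun x' => Qstar s' x' - φ s')) := by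
      have h1 := hQ s x
      have h2 := hQ' s x
      simp only [hD]
      rw [h1, h2]
      simp only [← hshift, mul_sub, Finset.sum_sub_distrib]
      ring
    rw [hDval, abs_mul, abs_of_nonneg hγ0]
    have hsum : |∑ s', T s x s' *
        (fmax (fun x' => Q'star s' x') - fmax (fun x' => Qstar s' x' - φ s'))| ≤ M := by
      calc |∑ s', T s x s' * (fmax (fun x' => Q'star s' x') -
              fmax (fun x' => Qstar s' x' - φ s'))|
          ≤ ∑ s', |T s x s' * (fmax (fun x' => Q'star s' x') -
              fmax (fun x' => Qstar s' x' - φ s'))| := Finset.abs_sum_le_sum_abs _ _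
        _ ≤ ∑ s', T s x s' * M := by
            apply Finset.sum_le_sum
            intro s' _
            rw [abs_mul, abs_of_nonneg (hT0 s x s')]
            apply mul_le_mul_of_nonneg_left _ (hT0 s x s')
            exact abs_fmax_sub_fmax_le _ _ fun x' => hDle s' x'
        _ = M := by rw [← Finset.sum_mul, hT1, one_mul]
    exact mul_le_mul_of_nonneg_left hsum hγ0
  have hMle : M ≤ γ * M := fmax_le fun p => hbound p.1 p.2
  have hM0 : M ≤ 0 := by nlinarith
  intro s x
  have := hDle s x
  have : |D s x| ≤ 0 := le_trans this hM0
  have : D s x = 0 := abs_nonpos_iff.mp this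
  simp only [hD] at this
  linarith
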